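/- Let c > 0 be a constant. For each integer n ≥ 2 with c·n·ln n > 1, set p_n = 1/(c·n·ln n), fix any q_n ∈ (0,1), and consider the MMAHH with acceptance operators OI and OW on OneMax over {0,1}^n with switching probabilities p = p_n and q = q_n, started from x_0 = (0,…,0) and s_0 = OI. Let P_n = Pr[y_{T_s^{(1)}} = 0] be the probability that the global optimum x* is reached by the end of the first phase. Then lim_{n→∞} P_n = e^{−1/c}. -/

import Mathlib

open MeasureTheory
open scoped ENNReal NNReal

namespace MMAHHStmt

/-- The two acceptance operators. -/
inductive Op : Type
  | OI : Op
  | OW : Op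
  deriving DecidableEq

instance : MeasurableSpace Op := ⊤

/-- Search points: bit-strings of length `n`. -/
abbrev Point (n : ℕ) := Fin n → Bool

/-- The number of one-bits of a bit-string. -/
def ones {n : ℕ} (x : Point n) : ℕ := (Finset.univ.filter fun i => x i = true).card

/-- The all-ones string, the global optimum of all benchmarks considered. -/
def optimum (n : ℕ) : Point n := fun _ => true

/-- Flipping the bit in position `v`. -/
def flipBit {n : ℕ} (x : Point n) (v : Fin n) : Point n := Function.update x v (!(x v))

open Classical in
/-- The search point obtained from `x` by proposing to flip bit `v` and applying the
acceptance operator `op` for the objective function `f`. -/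
noncomputable def movedPoint {n : ℕ} (f : Point n → ℝ) (op : Op) (x : Point n) (v : Fin n) :
    Point n :=
  match op with
  | Op.OI => if f x < f (flipBit x v) then flipBit x v else x
  | Op.OW => if f (flipBit x v) < f x then flipBit x v else x

open Classical in
/-- One-step transition probability of the search point under acceptance operator `op`:
a uniformly random bit is flipped and the move is accepted or rejected according to `op`. -/
noncomputable def moveProb {n : ℕ} (f : Point n → ℝ) (op : Op) (x x' : Point n) : ℝ≥0∞ :=
  ((Finset.univ.filter fun v => movedPoint f op x v = x').card : ℝ≥0∞) / n

/-- Transition probabilities of the two-state Markov chain on the acceptance operators. -/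
noncomputable def switchProb (p q : ℝ) : Op → Op → ℝ≥0∞
  | Op.OI, Op.OI => ENNReal.ofReal (1 - p)
  | Op.OI, Op.OW => ENNReal.ofReal p
  | Op.OW, Op.OI => ENNReal.ofReal q
  | Op.OW, Op.OW => ENNReal.ofReal (1 - q)

/-- One-step transition probabilities of the MMAHH on the state space
`Point n × Op`: the search point moves according to the current acceptance operator, and,
independently, the operator switches according to the two-state Markov chain. -/
noncomputable def mmahhTrans {n : ℕ} (f : Point n → ℝ) (p q : ℝ) :
    Point n × Op → Point n × Op → ℝ≥0∞ :=
  fun s s' => moveProb f s.2 s.1 s'.1 * switchProb p q s.2 s'.2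

/-- `X` is (a version of) the MMAHH Markov chain with objective function `f` and switching
probabilities `p` and `q`, under the measure `μ`: each `X t` is measurable, and conditionally
on any history, the next state is distributed according to `mmahhTrans`. -/
def IsMMAHH {n : ℕ} {Ω : Type*} [MeasurableSpace Ω] (μ : Measure Ω)
    (X : ℕ → Ω → Point n × Op) (f : Point n → ℝ) (p q : ℝ) : Prop :=
  (∀ t, Measurable (X t)) ∧
  ∀ (t : ℕ) (σ : ℕ → Point n × Op) (s' : Point n × Op),
    μ {ω | (∀ i ≤ t, X i ω = σ i) ∧ X (t + 1) ω = s'}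
      = μ {ω | ∀ i ≤ t, X i ω = σ i} * mmahhTrans f p q (σ t) s'

/-- The runtime: the first hitting time of the global optimum, as an extended natural number
(`⊤` if the optimum is never reached). -/
noncomputable def hitTime {n : ℕ} {Ω : Type*} (X : ℕ → Ω → Point n × Op) (ω : Ω) : ℕ∞ :=
  ⨅ t ∈ {t : ℕ | (X t ω).1 = optimum n}, (t : ℕ∞)

/-- The `k`-th switching time between the two acceptance operators (with junk value given by
`Nat.sInf ∅ = 0` on the probability-zero event that no further switch occurs). -/
noncomputable def switchTime {n : ℕ} {Ω : Type*} (X : ℕ → Ω → Point n × Op) : ℕ → Ω → ℕ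
  | 0, _ => 0
  | k + 1, ω =>
      sInf {t : ℕ | switchTime X k ω ≤ t ∧ (X t ω).2 ≠ (X (switchTime X k ω) ω).2}

/-- The OneMax benchmark. -/
noncomputable def OneMax (n : ℕ) (x : Point n) : ℝ := (ones x : ℝ)

/-!
Under `OI` on OneMax exactly the flips of zero bits are accepted, so during the first phase the
number `k` of zero bits only goes down, from `k` to `k - 1` with probability `k / n`, and each step
ends the phase with probability `p`. Let `g k` be the probability that the phase ends at the
optimum when it is still running at level `k`, and `h k = p [k = 0] + (1 - p) g k` the same
probability one step earlier, before the operator is redrawn. Then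
`n g k = (n - k) h k + k h (k - 1)`, whence `h k = ∏_{1 ≤ i ≤ k} i (1 - p) / (n p + i (1 - p))`
and `g n = h (n - 1)`. Since `g` is harmonic for the chain stopped at the end of the phase, `g n`
equals the probability of success within `t` steps up to an error of at most
`Pr[the phase lasts t steps] = (1 - p)^t`.

Finally `h (n - 1) = ∏_{i < n-1} (1 + ε / (i + 1))⁻¹` with `ε = n p / (1 - p) ~ 1 / (c ln n)`, and
as `log (1 + a) ~ a` for small `a`, its logarithm is `~ -ε H_{n-1} → -1/c`.
-/

open Finset Filter Topology Real

instance : Fintype Op := ⟨{Op.OI, Op.OW}, fun x => by cases x <;> simp⟩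

instance : MeasurableSingletonClass Op := ⟨fun _ => trivial⟩

section MarkovChain

variable {S Ω : Type*} [MeasurableSpace S] [MeasurableSpace Ω]

def IsMarkovChain (μ : Measure Ω) (X : ℕ → Ω → S) (κ : S → S → ℝ≥0∞) : Prop :=
  (∀ t, Measurable (X t)) ∧
  ∀ (t : ℕ) (σ : ℕ → S) (s' : S),
    μ {ω | (∀ i ≤ t, X i ω = σ i) ∧ X (t + 1) ω = s'}
      = μ {ω | ∀ i ≤ t, X i ω = σ i} * κ (σ t) s'

variable [Finite S] [MeasurableSingletonClass S] {μ : Measure Ω} {X : ℕ → Ω → S}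
  {κ : S → S → ℝ≥0∞}

theorem IsMarkovChain.measure_inter_eq_mul (hX : IsMarkovChain μ X κ) {t : ℕ} {E : Set Ω}
    {s : S} (hE : ∀ ω ω', (∀ i ≤ t, X i ω = X i ω') → ω ∈ E → ω' ∈ E)
    (hEs : ∀ ω ∈ E, X t ω = s) (s' : S) :
    μ (E ∩ {ω | X (t + 1) ω = s'}) = μ E * κ s s' := by
  set cyl : (ℕ → S) → Set Ω := fun σ => {ω | ∀ i ≤ t, X i ω = σ i}
  -- the histories up to time `t`, frozen after `t`
  set H : Set (ℕ → S) := (fun ω i => X (min i t) ω) '' E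
  have hH : H.Finite := by
    refine (Set.finite_range fun τ : Fin (t + 1) → S => fun i => τ ⟨min i t, by omega⟩).subset ?_
    rintro _ ⟨ω, -, rfl⟩
    exact ⟨fun i => X i ω, rfl⟩
  have hEH : E = ⋃ σ ∈ H, cyl σ := by
    ext ω
    simp only [H, cyl, Set.mem_iUnion, Set.mem_image, Set.mem_ofPred_eq, exists_prop]
    constructor
    · intro hω
      exact ⟨_, ⟨ω, hω, rfl⟩, fun i hi => by rw [min_eq_left hi]⟩
    · rintro ⟨_, ⟨ω', hω', rfl⟩, hω⟩
      exact hE ω' ω (fun i hi => by rw [hω i hi]; simp only [min_eq_left hi]) hω'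
  have hdisj : H.PairwiseDisjoint cyl := by
    rintro _ ⟨ω₁, -, rfl⟩ _ ⟨ω₂, -, rfl⟩ hne
    refine Set.disjoint_left.2 fun ω h₁ h₂ => hne (funext fun i => ?_)
    have e₁ := h₁ (min i t) (min_le_right _ _)
    have e₂ := h₂ (min i t) (min_le_right _ _)
    simp only [min_eq_left (min_le_right i t)] at e₁ e₂
    exact e₁.symm.trans e₂
  have hcyl : ∀ σ, MeasurableSet (cyl σ) := fun σ => by
    simp only [cyl, Set.ofPred_forall]
    exact .iInter fun i => .iInter fun _ => hX.1 i (measurableSet_singleton _)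
  have hlast : ∀ σ ∈ H, σ t = s := by
    rintro _ ⟨ω, hω, rfl⟩
    simpa using hEs ω hω
  rw [hEH, Set.iUnion₂_inter, measure_biUnion hH.countable, measure_biUnion hH.countable hdisj
    fun σ _ => hcyl σ, ← ENNReal.tsum_mul_right]
  · refine tsum_congr fun σ => ?_
    rw [← hlast σ σ.2]
    exact hX.2 t σ s'
  · exact hdisj.mono fun _ => Set.inter_subset_left
  · exact fun σ _ => (hcyl σ).inter (hX.1 (t + 1) (measurableSet_singleton _))

end MarkovChain

lemma sum_measureReal_setOf_eq_inter {Ω β : Type*} [MeasurableSpace Ω] [Fintype β]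
    [MeasurableSpace β] [MeasurableSingletonClass β] {μ : Measure Ω} [IsFiniteMeasure μ]
    {f : Ω → β} (hf : Measurable f) (A : Set Ω) :
    ∑ b, μ.real ({ω | f ω = b} ∩ A) = μ.real A := by
  have h : ∀ b, {ω | f ω = b} ∩ A = f ⁻¹' {b} ∩ A := fun b => rfl
  simp_rw [h, ← measureReal_restrict_apply (hf (measurableSet_singleton _))]
  rw [sum_measureReal_preimage_singleton _ fun b _ => hf (measurableSet_singleton _)]
  simp

section OneMax

variable {n : ℕ}

lemma ones_le (x : Point n) : ones x ≤ n :=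
  (card_filter_le _ _).trans_eq (card_fin n)

lemma sub_ones_eq_zero_iff {x : Point n} : n - ones x = 0 ↔ x = optimum n := by
  have h := card_filter_eq_iff (s := univ) (p := fun i => x i = true)
  rw [card_univ, Fintype.card_fin] at h
  rw [Nat.sub_eq_zero_iff_le, (ones_le x).ge_iff_eq, ones, h, funext_iff]
  simp [optimum]

lemma card_filter_eq_false (x : Point n) : #{v | x v = false} = n - ones x := by
  have h := card_filter_add_card_filter_not (s := univ) (fun v => x v = true)
  simp only [card_univ, Fintype.card_fin, Bool.not_eq_true] at h
  rw [ones]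
  omega

lemma ones_flipBit_of_eq_false {x : Point n} {v : Fin n} (hv : x v = false) :
    ones (flipBit x v) = ones x + 1 := by
  have : univ.filter (fun i => flipBit x v i = true)
      = insert v (univ.filter fun i => x i = true) := by
    ext i
    rcases eq_or_ne i v with rfl | hi <;> simp [flipBit, *]
  rw [ones, this, card_insert_of_notMem (by simp [hv]), ones]

lemma ones_flipBit_of_eq_true {x : Point n} {v : Fin n} (hv : x v = true) :
    ones (flipBit x v) + 1 = ones x := by
  have : univ.filter (fun i => flipBit x v i = true)
      = (univ.filter fun i => x i = true).erase v := by
    ext i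
    rcases eq_or_ne i v with rfl | hi <;> simp [flipBit, *]
  rw [ones, this, card_erase_add_one (by simp [hv]), ones]

lemma movedPoint_oneMax_OI (x : Point n) (v : Fin n) :
    movedPoint (OneMax n) Op.OI x v = if x v then x else flipBit x v := by
  simp only [movedPoint, OneMax, Nat.cast_lt]
  cases hv : x v
  · simp [ones_flipBit_of_eq_false hv]
  · simp [← ones_flipBit_of_eq_true hv]

lemma sum_movedPoint_oneMax_OI (φ : ℕ → ℝ) (x : Point n) :
    ∑ v, φ (n - ones (movedPoint (OneMax n) Op.OI x v))
      = ones x * φ (n - ones x) + (n - ones x : ℕ) * φ (n - ones x - 1) := by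
  rw [← sum_filter_add_sum_filter_not univ fun v => x v = true]
  have h₁ : ∀ v ∈ univ.filter fun v => x v = true,
      φ (n - ones (movedPoint (OneMax n) Op.OI x v)) = φ (n - ones x) := fun v hv => by
    rw [movedPoint_oneMax_OI, if_pos (mem_filter.1 hv).2]
  have h₂ : ∀ v ∈ univ.filter fun v => ¬x v = true,
      φ (n - ones (movedPoint (OneMax n) Op.OI x v)) = φ (n - ones x - 1) := fun v hv => by
    have hv : x v = false := by simpa using (mem_filter.1 hv).2
    rw [movedPoint_oneMax_OI, hv, if_neg Bool.false_ne_true, ones_flipBit_of_eq_false hv,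
      Nat.sub_add_eq]
  rw [sum_congr rfl h₁, sum_congr rfl h₂, sum_const, sum_const, nsmul_eq_mul, nsmul_eq_mul]
  simp only [Bool.not_eq_true, card_filter_eq_false]
  rfl

end OneMax

section Transition

variable {n : ℕ} (f : Point n → ℝ) {p : ℝ} (q : ℝ)

lemma sum_toReal_moveProb_mul (op : Op) (x : Point n) (φ : Point n → ℝ) :
    ∑ x', (moveProb f op x x').toReal * φ x' = (∑ v, φ (movedPoint f op x v)) / n := by
  simp only [moveProb, ENNReal.toReal_div, ENNReal.toReal_natCast, div_mul_eq_mul_div,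
    ← sum_div]
  congr 1
  rw [← sum_fiberwise univ (fun v => movedPoint f op x v) fun v => φ (movedPoint f op x v)]
  refine sum_congr rfl fun x' _ => ?_
  rw [sum_congr rfl fun v hv => by rw [(mem_filter.1 hv).2], sum_const, nsmul_eq_mul]

lemma toReal_mmahhTrans_OI_OI (hp : p ≤ 1) (x x' : Point n) :
    (mmahhTrans f p q (x, Op.OI) (x', Op.OI)).toReal
      = (moveProb f Op.OI x x').toReal * (1 - p) := by
  simp [mmahhTrans, switchProb, ENNReal.toReal_ofReal (sub_nonneg.2 hp)]

lemma toReal_mmahhTrans_OI_OW (hp : 0 ≤ p) (x x' : Point n) :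
    (mmahhTrans f p q (x, Op.OI) (x', Op.OW)).toReal = (moveProb f Op.OI x x').toReal * p := by
  simp [mmahhTrans, switchProb, ENNReal.toReal_ofReal hp]

lemma sum_toReal_mmahhTrans_OI_OI (hn : n ≠ 0) (hp : p ≤ 1) (x : Point n) :
    ∑ x', (mmahhTrans f p q (x, Op.OI) (x', Op.OI)).toReal = 1 - p := by
  have h := sum_toReal_moveProb_mul f Op.OI x 1
  simp only [Pi.one_apply, mul_one, sum_const, card_univ, Fintype.card_fin, nsmul_eq_mul] at h
  simp only [toReal_mmahhTrans_OI_OI f q hp, ← sum_mul]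
  rw [h, div_self (by exact_mod_cast hn), one_mul]

end Transition

section SuccessProb

variable {n : ℕ} {p : ℝ}

/-- `successProb n p k` is the probability that the first phase ends at the optimum when it is
still running with `k` zero bits; `successProbBeforeSwitch n p k` is the same probability just
after a move to level `k`, before the operator for the next step is drawn. -/
noncomputable def successProbBeforeSwitch (n : ℕ) (p : ℝ) (k : ℕ) : ℝ :=
  ∏ i ∈ range k, ((i + 1) * (1 - p)) / (n * p + (i + 1) * (1 - p))

noncomputable def successProb (n : ℕ) (p : ℝ) (k : ℕ) : ℝ :=
  ((n - k) * successProbBeforeSwitch n p k + k * successProbBeforeSwitch n p (k - 1)) / n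

lemma successProbBeforeSwitch_zero : successProbBeforeSwitch n p 0 = 1 :=
  prod_range_zero _

lemma successProbBeforeSwitch_succ_mul (k : ℕ) (hk : n * p + (k + 1) * (1 - p) ≠ 0) :
    successProbBeforeSwitch n p (k + 1) * (n * p + (k + 1) * (1 - p))
      = (k + 1) * (1 - p) * successProbBeforeSwitch n p k := by
  rw [successProbBeforeSwitch, prod_range_succ, ← successProbBeforeSwitch, mul_div_assoc',
    div_mul_cancel₀ _ hk]
  ring

lemma successProbBeforeSwitch_eq_prod (hp : p ≠ 1) (k : ℕ) :
    successProbBeforeSwitch n p k = ∏ i ∈ range k, (1 + n * p / (1 - p) / (i + 1))⁻¹ := by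
  refine prod_congr rfl fun i _ => ?_
  have : 1 - p ≠ 0 := sub_ne_zero.2 hp.symm
  field_simp
  ring

lemma successProbBeforeSwitch_nonneg (hp0 : 0 ≤ p) (hp1 : p ≤ 1) (k : ℕ) :
    0 ≤ successProbBeforeSwitch n p k :=
  prod_nonneg fun i _ => by have := sub_nonneg.2 hp1; positivity

lemma successProbBeforeSwitch_le_one (hp0 : 0 ≤ p) (hp1 : p ≤ 1) (k : ℕ) :
    successProbBeforeSwitch n p k ≤ 1 := by
  have := sub_nonneg.2 hp1
  exact prod_le_one (fun i _ => by positivity) fun i _ =>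
    div_le_one_of_le₀ (le_add_of_nonneg_left (by positivity)) (by positivity)

lemma successProb_nonneg (hp0 : 0 ≤ p) (hp1 : p ≤ 1) {k : ℕ} (hk : k ≤ n) :
    0 ≤ successProb n p k := by
  have : (k : ℝ) ≤ n := by exact_mod_cast hk
  have := successProbBeforeSwitch_nonneg (n := n) hp0 hp1 k
  have := successProbBeforeSwitch_nonneg (n := n) hp0 hp1 (k - 1)
  exact div_nonneg (by nlinarith) (Nat.cast_nonneg n)

lemma successProb_le_one (hp0 : 0 ≤ p) (hp1 : p ≤ 1) {k : ℕ} (hk : k ≤ n) :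
    successProb n p k ≤ 1 := by
  have : (k : ℝ) ≤ n := by exact_mod_cast hk
  have := successProbBeforeSwitch_le_one (n := n) hp0 hp1 k
  have := successProbBeforeSwitch_le_one (n := n) hp0 hp1 (k - 1)
  exact div_le_one_of_le₀ (by nlinarith [Nat.cast_nonneg (α := ℝ) k]) (Nat.cast_nonneg n)

lemma successProb_zero (hn : n ≠ 0) : successProb n p 0 = 1 := by
  rw [successProb, successProbBeforeSwitch_zero]
  field_simp
  simp

lemma successProb_self (hn : n ≠ 0) :
    successProb n p n = successProbBeforeSwitch n p (n - 1) := by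
  rw [successProb, sub_self, zero_mul, zero_add, mul_div_cancel_left₀ _ (by exact_mod_cast hn)]

lemma ite_add_mul_successProb (hn : n ≠ 0) (hp0 : 0 ≤ p) (hp1 : p < 1) (k : ℕ) :
    (if k = 0 then p else 0) + (1 - p) * successProb n p k = successProbBeforeSwitch n p k := by
  rcases k with _ | k
  · rw [if_pos rfl, successProb_zero hn, successProbBeforeSwitch_zero]
    ring
  · have hrec := successProbBeforeSwitch_succ_mul (n := n) (p := p) k (by
      have : 0 < 1 - p := sub_pos.2 hp1; positivity)
    have hn' : (n : ℝ) ≠ 0 := by exact_mod_cast hn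
    rw [if_neg k.succ_ne_zero, zero_add, successProb, Nat.add_sub_cancel]
    field_simp
    push_cast
    linear_combination -hrec

theorem successProb_eq_toReal_mmahhTrans_add_sum (hn : n ≠ 0) (hp0 : 0 ≤ p) (hp1 : p < 1)
    (q : ℝ) (x : Point n) :
    successProb n p (n - ones x)
      = (mmahhTrans (OneMax n) p q (x, Op.OI) (optimum n, Op.OW)).toReal
        + ∑ x', (mmahhTrans (OneMax n) p q (x, Op.OI) (x', Op.OI)).toReal
            * successProb n p (n - ones x') := by
  have hmove := sum_toReal_moveProb_mul (OneMax n) Op.OI x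
    fun x' => successProbBeforeSwitch n p (n - ones x')
  rw [sum_movedPoint_oneMax_OI] at hmove
  calc successProb n p (n - ones x)
      = ∑ x', (moveProb (OneMax n) Op.OI x x').toReal
          * successProbBeforeSwitch n p (n - ones x') := by
        rw [hmove, successProb, Nat.cast_sub (ones_le x), sub_sub_cancel]
    _ = ∑ x', (moveProb (OneMax n) Op.OI x x').toReal
          * ((if x' = optimum n then p else 0) + (1 - p) * successProb n p (n - ones x')) := by
        refine sum_congr rfl fun x' _ => ?_
        simp only [← ite_add_mul_successProb hn hp0 hp1, sub_ones_eq_zero_iff]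
    _ = _ := by
        simp only [toReal_mmahhTrans_OI_OW _ q hp0, toReal_mmahhTrans_OI_OI _ q hp1.le, mul_add,
          sum_add_distrib, mul_ite, mul_zero, sum_ite_eq', mem_univ, if_true, mul_assoc]

end SuccessProb

section FirstPhase

variable {n : ℕ} {Ω : Type*}

def firstPhaseUntil (X : ℕ → Ω → Point n × Op) (t : ℕ) : Set Ω :=
  {ω | X 0 ω = (fun _ => false, Op.OI) ∧ ∀ i ≤ t, (X i ω).2 = Op.OI}

def firstPhaseEndsAtOptimum (X : ℕ → Ω → Point n × Op) (m : ℕ) : Set Ω :=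
  firstPhaseUntil X m ∩ {ω | X (m + 1) ω = (optimum n, Op.OW)}

lemma setOf_fst_eq_inter_firstPhaseUntil_succ (X : ℕ → Ω → Point n × Op) (t : ℕ)
    (x : Point n) :
    {ω | (X (t + 1) ω).1 = x} ∩ firstPhaseUntil X (t + 1)
      = firstPhaseUntil X t ∩ {ω | X (t + 1) ω = (x, Op.OI)} := by
  ext ω
  simp only [firstPhaseUntil, Set.mem_inter_iff, Set.mem_ofPred_eq, Prod.ext_iff]
  constructor
  · rintro ⟨hx, h0, hOI⟩
    exact ⟨⟨h0, fun i hi => hOI i (by omega)⟩, hx, hOI _ le_rfl⟩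
  · rintro ⟨⟨h0, hOI⟩, hx, hOI'⟩
    refine ⟨hx, h0, fun i hi => ?_⟩
    rcases Nat.lt_succ_iff_lt_or_eq.1 (Nat.lt_succ_of_le hi) with hi | rfl
    · exact hOI i (Nat.lt_succ_iff.1 hi)
    · exact hOI'

lemma switchTime_one_eq {X : ℕ → Ω → Point n × Op} {ω : Ω} {m : ℕ}
    (hm : ∀ i ≤ m, (X i ω).2 = (X 0 ω).2) (hm' : (X (m + 1) ω).2 ≠ (X 0 ω).2) :
    switchTime X 1 ω = m + 1 := by
  simp only [switchTime, zero_le, true_and]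
  refine le_antisymm (Nat.sInf_le hm') (le_csInf ⟨_, hm'⟩ fun u hu => ?_)
  by_contra! h
  exact hu (hm u (by omega))

lemma firstPhaseEndsAtOptimum_subset (X : ℕ → Ω → Point n × Op) (m : ℕ) :
    firstPhaseEndsAtOptimum X m ⊆ {ω | n - ones (X (switchTime X 1 ω) ω).1 = 0} := by
  rintro ω ⟨⟨h0, hOI⟩, hm⟩
  have h0' : (X 0 ω).2 = Op.OI := by rw [h0]
  rw [Set.mem_ofPred_eq, switchTime_one_eq (fun i hi => (hOI i hi).trans h0'.symm)
    (by rw [hm, h0']; simp), hm, sub_ones_eq_zero_iff]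

lemma pairwise_disjoint_firstPhaseEndsAtOptimum (X : ℕ → Ω → Point n × Op) :
    Pairwise (Function.onFun Disjoint (firstPhaseEndsAtOptimum X)) := by
  refine pairwise_disjoint_on _ |>.2 fun m m' hmm' => Set.disjoint_left.2 ?_
  rintro ω ⟨-, hm⟩ ⟨⟨-, hOI⟩, -⟩
  have := hOI (m + 1) hmm'
  rw [hm] at this
  exact Op.noConfusion this

lemma setOf_inter_subset_firstPhaseUntil_union (X : ℕ → Ω → Point n × Op) (t : ℕ) :
    {ω | n - ones (X (switchTime X 1 ω) ω).1 = 0} ∩ {ω | X 0 ω = (fun _ => false, Op.OI)}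
      ⊆ firstPhaseUntil X t ∪ ⋃ m ∈ range t, firstPhaseEndsAtOptimum X m := by
  rintro ω ⟨(hE : _ = 0), (h0 : _ = _)⟩
  by_cases hOI : ∀ i ≤ t, (X i ω).2 = Op.OI
  · exact Or.inl ⟨h0, hOI⟩
  have hex : ∃ j, (X j ω).2 ≠ Op.OI := by
    simp only [not_forall] at hOI
    obtain ⟨j, -, hj⟩ := hOI
    exact ⟨j, hj⟩
  obtain ⟨m, hm⟩ : ∃ m, Nat.find hex = m + 1 :=
    Nat.exists_eq_add_one.2 (Nat.pos_of_ne_zero fun h => by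
      simpa [h, h0] using Nat.find_spec hex)
  have hbefore : ∀ i ≤ m, (X i ω).2 = Op.OI := fun i hi =>
    not_not.1 (Nat.find_min hex (by omega))
  have hswitch : (X (m + 1) ω).2 = Op.OW := by
    have := Nat.find_spec hex
    rw [hm] at this
    cases h : (X (m + 1) ω).2 <;> simp_all
  have h0' : (X 0 ω).2 = Op.OI := by rw [h0]
  rw [switchTime_one_eq (fun i hi => (hbefore i hi).trans h0'.symm) (by rw [hswitch, h0']; simp),
    sub_ones_eq_zero_iff] at hE
  refine Or.inr (Set.mem_biUnion (x := m) (mem_range.2 ?_) ⟨⟨h0, hbefore⟩, Prod.ext hE hswitch⟩)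
  by_contra! htm
  exact hOI fun i hi => hbefore i (by omega)

variable [MeasurableSpace Ω]

lemma measurableSet_firstPhaseUntil {X : ℕ → Ω → Point n × Op} (hX : ∀ t, Measurable (X t))
    (t : ℕ) : MeasurableSet (firstPhaseUntil X t) := by
  simp only [firstPhaseUntil, Set.ofPred_and, Set.ofPred_forall]
  exact (hX 0 (measurableSet_singleton _)).inter
    (.iInter fun i => .iInter fun _ => (hX i).snd (measurableSet_singleton _))

lemma measurableSet_firstPhaseEndsAtOptimum {X : ℕ → Ω → Point n × Op}
    (hX : ∀ t, Measurable (X t)) (m : ℕ) : MeasurableSet (firstPhaseEndsAtOptimum X m) :=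
  (measurableSet_firstPhaseUntil hX m).inter (hX (m + 1) (measurableSet_singleton _))

noncomputable def firstPhaseSum (μ : Measure Ω) (X : ℕ → Ω → Point n × Op) (t : ℕ)
    (φ : Point n → ℝ) : ℝ :=
  ∑ x, μ.real ({ω | (X t ω).1 = x} ∩ firstPhaseUntil X t) * φ x

variable {μ : Measure Ω} {X : ℕ → Ω → Point n × Op} {p q : ℝ}

lemma firstPhaseSum_zero (hinit : μ {ω | X 0 ω = (fun _ => false, Op.OI)} = 1)
    (φ : Point n → ℝ) : firstPhaseSum μ X 0 φ = φ fun _ => false := by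
  have h0 : firstPhaseUntil X 0 = {ω | X 0 ω = (fun _ => false, Op.OI)} := by
    ext ω
    refine ⟨And.left, fun h => ⟨h, fun i hi => ?_⟩⟩
    rw [Nat.le_zero.1 hi, h]
  rw [firstPhaseSum, sum_eq_single (fun _ => false), h0]
  · have : {ω | (X 0 ω).1 = fun _ => false} ∩ {ω | X 0 ω = (fun _ => false, Op.OI)}
        = {ω | X 0 ω = (fun _ => false, Op.OI)} :=
      Set.inter_eq_right.2 fun ω (h : _ = _) => by simp [h]
    rw [this, measureReal_def, hinit, ENNReal.toReal_one, one_mul]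
  · intro x _ hx
    have : {ω | (X 0 ω).1 = x} ∩ {ω | X 0 ω = (fun _ => false, Op.OI)} = ∅ :=
      Set.eq_empty_of_forall_notMem fun ω ⟨(hx' : _ = _), (h : _ = _)⟩ => hx (by rw [← hx', h])
    rw [h0, this, measureReal_empty, zero_mul]
  · simp

variable [IsProbabilityMeasure μ]

lemma measureReal_firstPhaseUntil_inter (hX : IsMMAHH μ X (OneMax n) p q) (t : ℕ)
    (s' : Point n × Op) :
    μ.real (firstPhaseUntil X t ∩ {ω | X (t + 1) ω = s'})
      = firstPhaseSum μ X t fun x => (mmahhTrans (OneMax n) p q (x, Op.OI) s').toReal := by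
  rw [← sum_measureReal_setOf_eq_inter (hX.1 t).fst, firstPhaseSum]
  refine sum_congr rfl fun x _ => ?_
  have hE : ∀ ω ω', (∀ i ≤ t, X i ω = X i ω') →
      ω ∈ {ω | (X t ω).1 = x} ∩ firstPhaseUntil X t →
        ω' ∈ {ω | (X t ω).1 = x} ∩ firstPhaseUntil X t := by
    rintro ω ω' h ⟨(hx : _ = _), h0, hOI⟩
    refine ⟨?_, ?_, fun i hi => ?_⟩
    · rw [Set.mem_ofPred_eq, ← h t le_rfl, hx]
    · rw [← h 0 (Nat.zero_le t), h0]
    · rw [← h i hi, hOI i hi]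
  have hEs : ∀ ω ∈ {ω | (X t ω).1 = x} ∩ firstPhaseUntil X t, X t ω = (x, Op.OI) := by
    rintro ω ⟨(hx : _ = _), -, hOI⟩
    exact Prod.ext hx (hOI t le_rfl)
  have hMarkov : IsMarkovChain μ X (mmahhTrans (OneMax n) p q) := hX
  rw [← Set.inter_assoc, measureReal_def, hMarkov.measure_inter_eq_mul hE hEs,
    ENNReal.toReal_mul, measureReal_def]

lemma firstPhaseSum_succ (hX : IsMMAHH μ X (OneMax n) p q) (t : ℕ) (φ : Point n → ℝ) :
    firstPhaseSum μ X (t + 1) φ = firstPhaseSum μ X t fun x =>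
      ∑ x', (mmahhTrans (OneMax n) p q (x, Op.OI) (x', Op.OI)).toReal * φ x' := by
  simp only [firstPhaseSum, setOf_fst_eq_inter_firstPhaseUntil_succ,
    measureReal_firstPhaseUntil_inter hX, sum_mul, mul_sum]
  rw [sum_comm]
  simp only [mul_assoc]

variable (hX : IsMMAHH μ X (OneMax n) p q)
  (hinit : μ {ω | X 0 ω = (fun _ => false, Op.OI)} = 1) (hn : n ≠ 0)
include hX hinit hn

lemma firstPhaseSum_one (hp : p ≤ 1) (t : ℕ) : firstPhaseSum μ X t 1 = (1 - p) ^ t := by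
  induction t with
  | zero => exact firstPhaseSum_zero hinit _
  | succ t ih =>
    rw [firstPhaseSum_succ hX]
    simp only [Pi.one_apply, mul_one, sum_toReal_mmahhTrans_OI_OI _ q hn hp]
    rw [pow_succ, ← ih]
    simp [firstPhaseSum, sum_mul]

lemma measureReal_firstPhaseUntil (hp : p ≤ 1) (t : ℕ) :
    μ.real (firstPhaseUntil X t) = (1 - p) ^ t := by
  rw [← firstPhaseSum_one hX hinit hn hp]
  simp [firstPhaseSum, sum_measureReal_setOf_eq_inter (hX.1 t).fst]

lemma firstPhaseSum_successProb_mem_Icc (hp0 : 0 ≤ p) (hp1 : p ≤ 1) (t : ℕ) :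
    firstPhaseSum μ X t (fun x => successProb n p (n - ones x)) ∈ Set.Icc 0 ((1 - p) ^ t) := by
  rw [← measureReal_firstPhaseUntil hX hinit hn hp1 t,
    ← sum_measureReal_setOf_eq_inter (hX.1 t).fst]
  refine ⟨sum_nonneg fun x _ => mul_nonneg measureReal_nonneg
    (successProb_nonneg hp0 hp1 (Nat.sub_le _ _)), sum_le_sum fun x _ => ?_⟩
  exact mul_le_of_le_one_right measureReal_nonneg (successProb_le_one hp0 hp1 (Nat.sub_le _ _))

theorem successProb_eq_sum_add_firstPhaseSum (hp0 : 0 ≤ p) (hp1 : p < 1) (t : ℕ) :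
    successProb n p n = ∑ m ∈ range t, μ.real (firstPhaseEndsAtOptimum X m)
      + firstPhaseSum μ X t fun x => successProb n p (n - ones x) := by
  induction t with
  | zero => simp [firstPhaseSum_zero hinit, ones]
  | succ t ih =>
    rw [ih, sum_range_succ, add_assoc, firstPhaseEndsAtOptimum, firstPhaseSum_succ hX,
      measureReal_firstPhaseUntil_inter hX, firstPhaseSum, firstPhaseSum, firstPhaseSum,
      ← sum_add_distrib]
    congr 2 with x
    rw [← mul_add, ← successProb_eq_toReal_mmahhTrans_add_sum hn hp0 hp1]

lemma abs_measureReal_success_sub_le (hp0 : 0 ≤ p) (hp1 : p < 1) (t : ℕ) :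
    |μ.real {ω | n - ones (X (switchTime X 1 ω) ω).1 = 0} - successProb n p n|
      ≤ (1 - p) ^ t := by
  set E := {ω | n - ones (X (switchTime X 1 ω) ω).1 = 0}
  have hsplit := successProb_eq_sum_add_firstPhaseSum hX hinit hn hp0 hp1 t
  have hrest := firstPhaseSum_successProb_mem_Icc hX hinit hn hp0 hp1.le t
  have hlow : ∑ m ∈ range t, μ.real (firstPhaseEndsAtOptimum X m) ≤ μ.real E := by
    rw [← measureReal_biUnion_finset
      ((pairwise_disjoint_firstPhaseEndsAtOptimum X).set_pairwise _)
      fun m _ => measurableSet_firstPhaseEndsAtOptimum hX.1 m]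
    exact measureReal_mono (Set.iUnion₂_subset fun m _ => firstPhaseEndsAtOptimum_subset X m)
  have hup : μ.real E ≤ (1 - p) ^ t + ∑ m ∈ range t, μ.real (firstPhaseEndsAtOptimum X m) := by
    have h0 : μ {ω | X 0 ω = (fun _ => false, Op.OI)}ᶜ = 0 :=
      (prob_compl_eq_zero_iff (hX.1 0 (measurableSet_singleton _))).2 hinit
    calc μ.real E = μ.real (E ∩ {ω | X 0 ω = (fun _ => false, Op.OI)}) := by
          rw [measureReal_def, measureReal_def, measure_inter_conull h0]
      _ ≤ μ.real (firstPhaseUntil X t ∪ ⋃ m ∈ range t, firstPhaseEndsAtOptimum X m) :=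
          measureReal_mono (setOf_inter_subset_firstPhaseUntil_union X t)
      _ ≤ _ := (measureReal_union_le _ _).trans (add_le_add
          (measureReal_firstPhaseUntil hX hinit hn hp1.le t).le
          (measureReal_biUnion_finset_le _ _))
  rw [abs_le]
  constructor <;> linarith [hrest.1, hrest.2]

theorem measureReal_success (hp0 : 0 < p) (hp1 : p < 1) :
    μ.real {ω | n - ones (X (switchTime X 1 ω) ω).1 = 0} = successProb n p n := by
  have hlim := tendsto_pow_atTop_nhds_zero_of_lt_one (sub_nonneg.2 hp1.le) (sub_lt_self 1 hp0)
  exact sub_eq_zero.1 (abs_nonpos_iff.1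
    (ge_of_tendsto' hlim (abs_measureReal_success_sub_le hX hinit hn hp0.le hp1)))

end FirstPhase

section Asymptotics

lemma tendsto_prod_inv_one_add_div {ε : ℕ → ℝ} {m : ℕ → ℕ} {L : ℝ}
    (hε : ∀ᶠ k in atTop, 0 ≤ ε k) (hε0 : Tendsto ε atTop (𝓝 0))
    (hL : Tendsto (fun k => ε k * harmonic (m k)) atTop (𝓝 L)) :
    Tendsto (fun k => ∏ i ∈ range (m k), (1 + ε k / (i + 1))⁻¹) atTop (𝓝 (exp (-L))) := by
  set S := fun k => ∑ i ∈ range (m k), log (1 + ε k / (i + 1))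
  have hharm : ∀ k, ε k * harmonic (m k) = ∑ i ∈ range (m k), ε k / (i + 1) := fun k => by
    simp [harmonic, mul_sum, div_eq_mul_inv]
  -- `a / (1 + a) ≤ log (1 + a) ≤ a`, with `a = ε / (i + 1) ≤ ε`
  have hbounds : ∀ᶠ k in atTop,
      ε k * harmonic (m k) / (1 + ε k) ≤ S k ∧ S k ≤ ε k * harmonic (m k) := by
    filter_upwards [hε] with k hk
    rw [hharm, sum_div]
    constructor <;> refine sum_le_sum fun i _ => ?_
    · have ha : ε k / (i + 1) ≤ ε k := div_le_self hk (by linarith [i.cast_nonneg (α := ℝ)])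
      have ha0 : 0 ≤ ε k / (i + 1) := by positivity
      calc ε k / (i + 1) / (1 + ε k) ≤ ε k / (i + 1) / (1 + ε k / (i + 1)) :=
            div_le_div_of_nonneg_left ha0 (by positivity) (by linarith)
        _ = 1 - (1 + ε k / (i + 1))⁻¹ := by field_simp; ring
        _ ≤ log (1 + ε k / (i + 1)) := one_sub_inv_le_log_of_pos (by positivity)
    · have := log_le_sub_one_of_pos (x := 1 + ε k / (i + 1)) (by positivity)
      linarith
  have hS : Tendsto S atTop (𝓝 L) := by
    refine tendsto_of_tendsto_of_tendsto_of_le_of_le' ?_ hL (hbounds.mono fun _ => And.left)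
      (hbounds.mono fun _ => And.right)
    have h := hL.div (hε0.const_add 1) (by norm_num)
    rwa [add_zero, div_one] at h
  refine ((continuous_exp.tendsto _).comp hS.neg).congr' ?_
  filter_upwards [hε] with k hk
  simp only [Function.comp, S, exp_neg, exp_sum, ← prod_inv_distrib]
  exact prod_congr rfl fun i _ => by rw [exp_log (by positivity)]

lemma tendsto_natCast_mul_log_atTop {c : ℝ} (hc : 0 < c) :
    Tendsto (fun n : ℕ => c * n * log n) atTop atTop :=
  (tendsto_natCast_atTop_atTop.const_mul_atTop hc).atTop_mul_atTop₀
    (tendsto_log_atTop.comp tendsto_natCast_atTop_atTop)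

lemma tendsto_natCast_mul_odds_and_mul_harmonic {c : ℝ} (hc : 0 < c) :
    Tendsto (fun n : ℕ => n * (1 / (c * n * log n)) / (1 - 1 / (c * n * log n))) atTop (𝓝 0) ∧
    Tendsto (fun n : ℕ => n * (1 / (c * n * log n)) / (1 - 1 / (c * n * log n))
      * harmonic (n - 1)) atTop (𝓝 (1 / c)) := by
  have hp : Tendsto (fun n : ℕ => 1 / (c * n * log n)) atTop (𝓝 0) :=
    (tendsto_natCast_mul_log_atTop hc).inv_tendsto_atTop.congr fun n => (one_div _).symm
  have hinv : Tendsto (fun n : ℕ => (c * log n)⁻¹) atTop (𝓝 0) :=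
    ((tendsto_log_atTop.comp tendsto_natCast_atTop_atTop).const_mul_atTop hc).inv_tendsto_atTop
  have hγ : Tendsto (fun n : ℕ => harmonic (n - 1) - log n) atTop
      (𝓝 eulerMascheroniConstant) := by
    refine (tendsto_harmonic_sub_log_add_one.comp (tendsto_sub_atTop_nat 1)).congr' ?_
    filter_upwards [eventually_ge_atTop 1] with n hn
    simp [Nat.cast_sub hn]
  have hlog : ∀ᶠ n : ℕ in atTop, log n ≠ 0 ∧ (n : ℝ) ≠ 0 ∧ c * n * log n - 1 ≠ 0 := by
    filter_upwards [eventually_ge_atTop 2,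
      (tendsto_natCast_mul_log_atTop hc).eventually_gt_atTop 1] with n hn hcn
    have : (2 : ℝ) ≤ n := by exact_mod_cast hn
    exact ⟨(log_pos (by linarith)).ne', by positivity, by linarith⟩
  have hc0 := hc.ne'
  constructor
  · have h := hinv.div (tendsto_const_nhds.sub hp) (by norm_num : (1 : ℝ) - 0 ≠ 0)
    rw [zero_div] at h
    refine h.congr' ?_
    filter_upwards [hlog] with n ⟨hl, hn, hcn⟩
    simp only [Pi.div_apply]
    field_simp
  · have h := ((hγ.mul hinv).add_const c⁻¹).div (tendsto_const_nhds.sub hp)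
      (by norm_num : (1 : ℝ) - 0 ≠ 0)
    rw [mul_zero, zero_add, sub_zero, div_one, ← one_div] at h
    refine h.congr' ?_
    filter_upwards [hlog] with n ⟨hl, hn, hcn⟩
    simp only [Pi.div_apply]
    field_simp
    ring

end Asymptotics

/-- With `p = 1/(c·n·log n)`, the probability of optimizing OneMax in a single OI phase,
starting from the all-zero string, converges to `e^{-1/c}` (Lemma 2 of the paper). -/
theorem onemax_one_phase_limit (c : ℝ) (hc : 0 < c)
    (Ω : ℕ → Type) [inst : ∀ n, MeasurableSpace (Ω n)]
    (μ : ∀ n, Measure (Ω n)) (X : ∀ n, ℕ → Ω n → Point n × Op)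
    (q : ℕ → ℝ) (P : ℕ → ℝ)
    (h : ∀ n : ℕ, 2 ≤ n → 1 < c * (n : ℝ) * Real.log n →
      0 < q n ∧ q n < 1 ∧
      IsProbabilityMeasure (μ n) ∧
      IsMMAHH (μ n) (X n) (OneMax n) (1 / (c * (n : ℝ) * Real.log n)) (q n) ∧
      (μ n) {ω | X n 0 ω = (fun _ => false, Op.OI)} = 1 ∧
      P n = ((μ n) {ω | n - ones ((X n) (switchTime (X n) 1 ω) ω).1 = 0}).toReal) :
    Filter.Tendsto P Filter.atTop (nhds (Real.exp (-1 / c))) := by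
  have hgood : ∀ᶠ n : ℕ in atTop, 2 ≤ n ∧ 1 < c * n * log n :=
    (eventually_ge_atTop 2).and ((tendsto_natCast_mul_log_atTop hc).eventually_gt_atTop 1)
  have hp : ∀ᶠ n : ℕ in atTop, 0 < 1 / (c * n * log n) ∧ 1 / (c * n * log n) < 1 :=
    hgood.mono fun n ⟨_, hn⟩ => ⟨one_div_pos.2 (by linarith), (div_lt_one (by linarith)).2 hn⟩
  have hε : ∀ᶠ n : ℕ in atTop, 0 ≤ n * (1 / (c * n * log n)) / (1 - 1 / (c * n * log n)) :=
    hp.mono fun n ⟨hp0, hp1⟩ => by have := sub_pos.2 hp1; positivity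
  obtain ⟨hε0, hεH⟩ := tendsto_natCast_mul_odds_and_mul_harmonic hc
  rw [neg_div]
  refine (tendsto_prod_inv_one_add_div hε hε0 hεH).congr' ?_
  filter_upwards [hgood, hp] with n ⟨hn, hcn⟩ ⟨hp0, hp1⟩
  obtain ⟨-, -, hμ, hX, hinit, hP⟩ := h n hn hcn
  rw [hP, ← measureReal_def, measureReal_success hX hinit (by omega) hp0 hp1,
    successProb_self (by omega), successProbBeforeSwitch_eq_prod hp1.ne]
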